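/- arXiv:1506.00448 — 3 statements merged into one kernel-verified Lean document; each statement's English description precedes it below -/
import Mathlib

section
/- Let n > 0, let φ : ℤ/pℤ → ℝ/ℤ be a homomorphism, χ = e^{2πiφ}, let Γ be a finite set of pre-characters containing φ, and let ℬ = ℬ(Γ,n). If f : ℤ/pℤ → ℂ satisfies ‖f‖_∞ ≤ 1, then |⟨f − 𝔼(f|ℬ), χ⟩| ≤ 2π/n. -/
open Finset Complex

noncomputable section
open scoped Classical

/-- The representative of a point of `𝕋 = ℝ/ℤ` lying in `[0,1)`. -/
def torusRep (t : AddCircle (1 : ℝ)) : ℝ :=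
  haveI : Fact ((0 : ℝ) < 1) := ⟨one_pos⟩
  ((AddCircle.equivIco 1 0) t : ℝ)

/-- Same cell of the partition `ℬ(Γ,n)`. -/
def sameCell (p : ℕ) (Γ : Finset (ZMod p →+ AddCircle (1 : ℝ))) (n : ℕ)
    (x y : ZMod p) : Prop :=
  ∀ φ ∈ Γ, ⌊(n : ℝ) * torusRep (φ x)⌋ = ⌊(n : ℝ) * torusRep (φ y)⌋

/-- Conditional expectation of `f` with respect to the partition `ℬ(Γ,n)`:
the average of `f` over the cell containing `x`. -/
def condExp (p : ℕ) [NeZero p] (Γ : Finset (ZMod p →+ AddCircle (1 : ℝ))) (n : ℕ)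
    (f : ZMod p → ℂ) (x : ZMod p) : ℂ :=
  (∑ y ∈ Finset.univ.filter (sameCell p Γ n x), f y) /
    ((Finset.univ.filter (sameCell p Γ n x)).card : ℂ)

/-! Since averaging over the cells of `ℬ` is self-adjoint,
`⟨f - 𝔼(f|ℬ), χ⟩ = ⟨f, χ - 𝔼(χ|ℬ)⟩`. On a cell of `ℬ(Γ,n)` with `φ ∈ Γ` the representatives of
`φ` differ by less than `1/n`, so `χ` oscillates by at most `2π/n` there, and hence
`‖χ - 𝔼(χ|ℬ)‖_∞ ≤ 2π/n`. -/

open scoped BigOperators ComplexConjugate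

theorem conj_expect {𝕜 ι : Type*} [RCLike 𝕜] (s : Finset ι) (f : ι → 𝕜) :
    conj (𝔼 i ∈ s, f i) = 𝔼 i ∈ s, conj (f i) := by
  simp only [expect_eq_sum_div_card, map_div₀, map_sum, map_natCast]

theorem norm_sub_expect_le {𝕜 ι : Type*} [RCLike 𝕜] {s : Finset ι} {g : ι → 𝕜} {a : 𝕜}
    {ε : ℝ} (hs : s.Nonempty) (h : ∀ y ∈ s, ‖a - g y‖ ≤ ε) : ‖a - 𝔼 y ∈ s, g y‖ ≤ ε := by
  rw [← expect_const hs a, ← expect_sub_distrib]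
  exact (RCLike.norm_expect_le (K := 𝕜)).trans (expect_le hs h)

namespace Equivalence

variable {α 𝕜 : Type*} [Fintype α] {r : α → α → Prop} [DecidableRel r]

theorem filter_eq_of_rel (hr : Equivalence r) {x y : α} (hxy : r x y) :
    univ.filter (r x) = univ.filter (r y) := by
  ext z
  simp only [mem_filter, mem_univ, true_and]
  exact ⟨hr.trans (hr.symm hxy), hr.trans hxy⟩

theorem sum_expect_filter_mul [Semifield 𝕜] [CharZero 𝕜] (hr : Equivalence r) (f g : α → 𝕜) :
    ∑ x, (𝔼 y ∈ univ.filter (r x), f y) * g x = ∑ x, f x * 𝔼 y ∈ univ.filter (r x), g y := by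
  simp only [expect_eq_sum_div_card, sum_div, sum_mul, mul_sum, sum_filter]
  rw [sum_comm]
  refine sum_congr rfl fun x _ => sum_congr rfl fun y _ => ?_
  by_cases hyx : r y x
  · rw [if_pos hyx, if_pos (hr.symm hyx), hr.filter_eq_of_rel hyx]
    ring
  · simp only [if_neg hyx, if_neg fun h => hyx (hr.symm h), zero_div, zero_mul, mul_zero]

theorem expect_sub_expect_filter_mul_conj [RCLike 𝕜] (hr : Equivalence r) (f g : α → 𝕜) :
    𝔼 x, (f x - 𝔼 y ∈ univ.filter (r x), f y) * conj (g x)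
      = 𝔼 x, f x * conj (g x - 𝔼 y ∈ univ.filter (r x), g y) := by
  simp only [Fintype.expect_eq_sum_div_card, sub_mul, mul_sub, map_sub, sum_sub_distrib,
    conj_expect, hr.sum_expect_filter_mul]

theorem norm_expect_sub_expect_filter_mul_conj_le [RCLike 𝕜] [Nonempty α] (hr : Equivalence r)
    {f g : α → 𝕜} {M ε : ℝ} (hf : ∀ x, ‖f x‖ ≤ M) (hg : ∀ x y, r x y → ‖g x - g y‖ ≤ ε) :
    ‖𝔼 x, (f x - 𝔼 y ∈ univ.filter (r x), f y) * conj (g x)‖ ≤ M * ε := by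
  rw [hr.expect_sub_expect_filter_mul_conj]
  refine (RCLike.norm_expect_le (K := 𝕜)).trans (expect_le univ_nonempty fun x _ => ?_)
  have hproj : ‖g x - 𝔼 y ∈ univ.filter (r x), g y‖ ≤ ε :=
    norm_sub_expect_le ⟨x, by simpa using hr.refl x⟩ fun y hy => hg x y (by simpa using hy)
  rw [norm_mul, RCLike.norm_conj]
  exact mul_le_mul (hf x) hproj (norm_nonneg _) ((norm_nonneg _).trans (hf x))

end Equivalence

theorem sameCell_equivalence (p : ℕ) (Γ : Finset (ZMod p →+ AddCircle (1 : ℝ))) (n : ℕ) :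
    Equivalence (sameCell p Γ n) where
  refl _ _ _ := rfl
  symm h ψ hψ := (h ψ hψ).symm
  trans h h' ψ hψ := (h ψ hψ).trans (h' ψ hψ)

theorem condExp_eq_expect (p : ℕ) [NeZero p] (Γ : Finset (ZMod p →+ AddCircle (1 : ℝ))) (n : ℕ)
    (f : ZMod p → ℂ) (x : ZMod p) :
    condExp p Γ n f x = 𝔼 y ∈ univ.filter (sameCell p Γ n x), f y :=
  (expect_eq_sum_div_card _ _).symm

theorem abs_sub_lt_one_div_of_floor_mul_eq {a b : ℝ} {n : ℕ} (hn : 0 < n)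
    (h : ⌊(n : ℝ) * a⌋ = ⌊(n : ℝ) * b⌋) : |a - b| < 1 / n := by
  have h₁ := Int.abs_sub_lt_one_of_floor_eq_floor h
  rw [← mul_sub, abs_mul, Nat.abs_cast] at h₁
  rwa [lt_div_iff₀ (by positivity), mul_comm]

theorem norm_exp_two_pi_I_mul_sub_le (a b : ℝ) :
    ‖exp (2 * Real.pi * I * a) - exp (2 * Real.pi * I * b)‖ ≤ 2 * Real.pi * |a - b| := by
  have hsplit : exp (2 * Real.pi * I * a) - exp (2 * Real.pi * I * b)
      = exp (2 * Real.pi * I * b) * (exp (I * ↑(2 * Real.pi * (a - b))) - 1) := by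
    rw [mul_sub, mul_one, ← Complex.exp_add]
    push_cast
    ring_nf
  have hb : ‖exp (2 * Real.pi * I * b)‖ = 1 := by
    rw [show 2 * Real.pi * I * b = I * ↑(2 * Real.pi * b) by push_cast; ring]
    exact norm_exp_I_mul_ofReal _
  rw [hsplit, norm_mul, hb, one_mul]
  refine Real.norm_exp_I_mul_ofReal_sub_one_le.trans_eq ?_
  rw [Real.norm_eq_abs, abs_mul, abs_of_pos Real.two_pi_pos]

theorem fourier_coeff_of_proj_error (p : ℕ) (hp : p.Prime) (n : ℕ) (hn : 0 < n)
    (Γ : Finset (ZMod p →+ AddCircle (1 : ℝ))) (φ : ZMod p →+ AddCircle (1 : ℝ))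
    (hφ : φ ∈ Γ) (f : ZMod p → ℂ) (hf : ∀ x, ‖f x‖ ≤ 1) :
    haveI : NeZero p := ⟨hp.ne_zero⟩
    ‖(1 / p : ℂ) * ∑ x : ZMod p,
        (f x - condExp p Γ n f x) *
          (starRingEnd ℂ) (Complex.exp (2 * Real.pi * Complex.I * torusRep (φ x)))‖
      ≤ 2 * Real.pi / n := by
  have : NeZero p := ⟨hp.ne_zero⟩
  have hχ : ∀ x y, sameCell p Γ n x y →
      ‖exp (2 * Real.pi * I * torusRep (φ x)) - exp (2 * Real.pi * I * torusRep (φ y))‖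
        ≤ 2 * Real.pi / n := fun x y hxy =>
    calc _ ≤ 2 * Real.pi * |torusRep (φ x) - torusRep (φ y)| := norm_exp_two_pi_I_mul_sub_le _ _
      _ ≤ 2 * Real.pi * (1 / n) := by
        gcongr
        exact (abs_sub_lt_one_div_of_floor_mul_eq hn (hxy φ hφ)).le
      _ = 2 * Real.pi / n := by ring
  rw [one_div_mul_eq_div, show (p : ℂ) = Fintype.card (ZMod p) by rw [ZMod.card],
    ← Fintype.expect_eq_sum_div_card]
  simp only [condExp_eq_expect]
  simpa only [one_mul] using
    (sameCell_equivalence p Γ n).norm_expect_sub_expect_filter_mul_conj_le hf hχ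

end
end

section
/- Let m, K > 0 be integers, let b_1, …, b_m be integers with gcd(b_1,…,b_m) = 1 and |b_j| ≤ K for all j, and let b be an integer with |b| ≤ K. Then there exist integers c_1, …, c_m with |c_j| ≤ K for all j and b_1c_1 + … + b_mc_m = b. -/
/-!
Induct on the family. Split off one coefficient `a` and let `g ≥ 0` be the gcd of the others;
then `gcd(a, g) = 1` and `g ≤ K`. The two-variable case gives `a x + g y = t` with
`|x|, |y| ≤ K`, and the other coefficients divided by `g` still have gcd `1` and are bounded
by `K`, so by induction they realise `y`.

In two variables, with `u a + v g = 1`, take the balanced residue `x ≡ u t (mod g)`, so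
`2 |x| ≤ g`; then `y = (t - a x) / g` satisfies `g |y| ≤ K (1 + |x|) ≤ K g`.
-/

theorem Int.exists_dvd_sub_and_two_mul_abs_le (z : ℤ) {n : ℕ} (hn : 0 < n) :
    ∃ x : ℤ, (n : ℤ) ∣ z - x ∧ 2 * |x| ≤ n := by
  refine ⟨z.bmod n, Int.dvd_self_sub_bmod, ?_⟩
  have := Int.le_bmod (x := z) hn
  have := Int.bmod_lt (x := z) hn
  rcases abs_cases (z.bmod n) with ⟨h, _⟩ | ⟨h, _⟩ <;> omega

theorem Int.exists_abs_le_and_mul_add_mul_eq {K a g t : ℤ} (hg : 0 ≤ g) (hgK : g ≤ K)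
    (ha : |a| ≤ K) (ht : |t| ≤ K) (hcop : IsCoprime a g) :
    ∃ x y : ℤ, |x| ≤ K ∧ |y| ≤ K ∧ a * x + g * y = t := by
  lift g to ℕ using hg
  rcases g.eq_zero_or_pos with rfl | hg
  · obtain rfl | rfl := Int.isUnit_iff.1 (isCoprime_zero_right.1 (by simpa using hcop))
    · exact ⟨t, 0, ht, by simpa using hgK, by ring⟩
    · exact ⟨-t, 0, by simpa using ht, by simpa using hgK, by ring⟩
  obtain ⟨u, v, huv⟩ := hcop
  obtain ⟨x, hux, hx⟩ := Int.exists_dvd_sub_and_two_mul_abs_le (u * t) hg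
  have hxg : 1 + |x| ≤ g := by omega
  obtain ⟨y, hy⟩ : (g : ℤ) ∣ t - a * x := by
    have h : t - a * x = a * (u * t - x) + g * (v * t) := by linear_combination (-t) * huv
    rw [h]
    exact dvd_add (hux.mul_left a) (dvd_mul_right _ _)
  refine ⟨x, y, by omega, ?_, by linarith⟩
  have hyK : (g : ℤ) * |y| ≤ g * K :=
    calc (g : ℤ) * |y| = |t - a * x| := by rw [hy, abs_mul, Nat.abs_cast]
      _ ≤ |t| + |a| * |x| := by rw [← abs_mul]; exact abs_sub _ _
      _ ≤ K + K * |x| := by gcongr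
      _ = K * (1 + |x|) := by ring
      _ ≤ K * g := mul_le_mul_of_nonneg_left hxg ((abs_nonneg t).trans ht)
      _ = g * K := by ring
  exact le_of_mul_le_mul_left hyK (by exact_mod_cast hg)

theorem Finset.int_gcd_le_of_forall_abs_le {ι : Type*} {s : Finset ι} {b : ι → ℤ} {K : ℤ}
    (hK : 0 ≤ K) (hb : ∀ j ∈ s, |b j| ≤ K) : s.gcd b ≤ K := by
  by_cases h : ∀ j ∈ s, b j = 0
  · rw [gcd_eq_zero_iff.2 h]
    exact hK
  push Not at h
  obtain ⟨j, hj, hbj⟩ := h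
  exact (Int.le_of_dvd (abs_pos.2 hbj) ((dvd_abs _ _).2 (gcd_dvd hj))).trans (hb j hj)

theorem Finset.exists_abs_le_and_sum_mul_eq_of_gcd_eq_one {ι : Type*} [DecidableEq ι] {K : ℤ}
    (s : Finset ι) {b : ι → ℤ} (hgcd : s.gcd b = 1) (hb : ∀ j ∈ s, |b j| ≤ K) {t : ℤ}
    (ht : |t| ≤ K) : ∃ c : ι → ℤ, (∀ j, |c j| ≤ K) ∧ ∑ j ∈ s, b j * c j = t := by
  induction s using Finset.induction_on generalizing b t with
  | empty => simp at hgcd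
  | insert a s ha ih =>
    rw [gcd_insert] at hgcd
    have hK : 0 ≤ K := (abs_nonneg t).trans ht
    have hbs : ∀ j ∈ s, |b j| ≤ K := fun j hj => hb j (mem_insert_of_mem hj)
    have tail : ∀ y, |y| ≤ K → ∃ c : ι → ℤ, (∀ j, |c j| ≤ K) ∧
        ∑ j ∈ s, b j * c j = s.gcd b * y := by
      intro y hy
      by_cases hg : s.gcd b = 0
      · exact ⟨0, fun _ => by simpa using hK, by simp [hg]⟩
      obtain ⟨j, hj, hbj⟩ : ∃ j ∈ s, b j ≠ 0 := by simpa [gcd_eq_zero_iff] using hg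
      obtain ⟨c, hc, hsum⟩ := ih (gcd_div_eq_one hj hbj)
        (fun j hj => (Int.abs_ediv_le_abs _ _).trans (hbs j hj)) hy
      refine ⟨c, hc, ?_⟩
      rw [← hsum, mul_sum]
      refine sum_congr rfl fun j hj => ?_
      rw [← mul_assoc, Int.mul_ediv_cancel' (gcd_dvd hj)]
    obtain ⟨x, y, hx, hy, hxy⟩ := Int.exists_abs_le_and_mul_add_mul_eq
      (Int.nonneg_of_normalize_eq_self normalize_gcd)
      (int_gcd_le_of_forall_abs_le hK hbs) (hb a (mem_insert_self a s)) ht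
      ((gcd_isUnit_iff _ _).1 (hgcd ▸ isUnit_one))
    obtain ⟨c, hc, hsum⟩ := tail y hy
    refine ⟨Function.update c a x, fun j => ?_, ?_⟩
    · rcases eq_or_ne j a with rfl | hj
      · simpa using hx
      · simpa [hj] using hc j
    · rw [sum_insert ha, Function.update_self, sum_congr rfl fun j hj => by
        rw [Function.update_of_ne (ne_of_mem_of_not_mem hj ha)], hsum, hxy]

theorem bounded_bezout_general (m K : ℕ)
    (b : Fin m → ℤ) (hgcd : Finset.univ.gcd b = 1)
    (hb : ∀ j, |b j| ≤ (K : ℤ)) (t : ℤ) (ht : |t| ≤ (K : ℤ)) :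
    ∃ c : Fin m → ℤ, (∀ j, |c j| ≤ (K : ℤ)) ∧ ∑ j, b j * c j = t :=
  Finset.univ.exists_abs_le_and_sum_mul_eq_of_gcd_eq_one hgcd (fun j _ => hb j) ht

theorem bounded_bezout (m K : ℕ) (hm : 0 < m) (hK : 0 < K)
    (b : Fin m → ℤ) (hgcd : Finset.univ.gcd b = 1)
    (hb : ∀ j, |b j| ≤ (K : ℤ)) (t : ℤ) (ht : |t| ≤ (K : ℤ)) :
    ∃ c : Fin m → ℤ, (∀ j, |c j| ≤ (K : ℤ)) ∧ ∑ j, b j * c j = t :=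
  bounded_bezout_general m K b hgcd hb t ht
end

section
/- Let a = (a_1,…,a_d) ∈ ℤ^d with gcd(a_1,…,a_d) = 1, and let v_2,…,v_d ∈ ℤ^d be vectors orthogonal to a such that the matrix A with rows a, v_2, …, v_d has determinant Σ_j a_j². Then the ℤ-span of v_2,…,v_d equals {x ∈ ℤ^d : ⟨a,x⟩ = 0}, i.e. every integer vector orthogonal to a is an integer linear combination of v_2,…,v_d. -/
/-!
By Bézout there is `u` with `⟨a, u⟩ = 1`. Replacing the row `a` of `A` by `u` gives a matrix `C`
with `⟨a, u⟩ · det A = |a|² · det C`, since the row `⟨a, u⟩ a - |a|² u` is orthogonal to `a`, like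
all the other rows, and so spans a degenerate matrix with them. Hence `det C = 1`, every integer
vector is an integer combination of the rows of `C`, and pairing with `a` shows that the
coefficient of `u` vanishes exactly when the vector is orthogonal to `a`.
-/

open Finset Matrix

namespace Matrix

variable {n R : Type*} [Fintype n] [DecidableEq n]

theorem vecMul_updateRow_of_apply_eq_zero [CommRing R] (M : Matrix n n R) (i : n) (b c : n → R)
    (hc : c i = 0) : c ᵥ* M.updateRow i b = c ᵥ* M := by
  ext j
  refine Finset.sum_congr rfl fun k _ => ?_
  obtain rfl | hk := eq_or_ne k i
  · simp [hc]
  · simp [updateRow_ne hk]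

theorem dotProduct_mul_det_eq_mul_det_updateRow [CommRing R] [IsDomain R]
    {A : Matrix n n R} {i₀ : n} {a : n → R} (hrow : A i₀ = a)
    (horth : ∀ i, i ≠ i₀ → a ⬝ᵥ A i = 0) (u : n → R) :
    (a ⬝ᵥ u) * A.det = (a ⬝ᵥ a) * (A.updateRow i₀ u).det := by
  obtain rfl | ha := eq_or_ne a 0
  · simp
  have hdeg : (A.updateRow i₀ ((a ⬝ᵥ u) • a - (a ⬝ᵥ a) • u)).det = 0 := by
    refine exists_mulVec_eq_zero_iff.mp ⟨a, ha, ?_⟩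
    ext i
    rw [updateRow_mulVec]
    obtain rfl | hi := eq_or_ne i i₀
    · simp only [Function.update_self, sub_dotProduct, smul_dotProduct, smul_eq_mul,
        dotProduct_comm u a, Pi.zero_apply]
      ring
    · rw [Function.update_of_ne hi, mulVec, dotProduct_comm, horth i hi, Pi.zero_apply]
  have hA : A.updateRow i₀ a = A := hrow ▸ updateRow_eq_self A i₀
  rw [sub_eq_add_neg, ← neg_smul, det_updateRow_add, det_updateRow_smul, det_updateRow_smul,
    hA] at hdeg
  linear_combination hdeg

theorem exists_vecMul_eq_of_dotProduct_eq_zero [CommRing R] {A : Matrix n n R} {i₀ : n}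
    {a u x : n → R} (horth : ∀ i, i ≠ i₀ → a ⬝ᵥ A i = 0) (hu : a ⬝ᵥ u = 1)
    (hunit : IsUnit (A.updateRow i₀ u)) (hx : a ⬝ᵥ x = 0) :
    ∃ c : n → R, c i₀ = 0 ∧ c ᵥ* A = x := by
  obtain ⟨c, rfl⟩ := vecMul_surjective_iff_isUnit.mpr hunit x
  have hCa : A.updateRow i₀ u *ᵥ a = Pi.single i₀ 1 := by
    rw [updateRow_mulVec]
    ext i
    obtain rfl | hi := eq_or_ne i i₀
    · simp [dotProduct_comm, hu]
    · simp [hi, mulVec, dotProduct_comm, horth i hi]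
  have hc : c i₀ = 0 := by
    rwa [dotProduct_comm, ← dotProduct_mulVec, hCa, dotProduct_single_one] at hx
  exact ⟨c, hc, (vecMul_updateRow_of_apply_eq_zero A i₀ u c hc).symm⟩

end Matrix

theorem rows_span_orthogonal_lattice (d : ℕ) (hd : 1 ≤ d)
    (a : Fin d → ℤ) (hgcd : Finset.univ.gcd a = 1)
    (A : Matrix (Fin d) (Fin d) ℤ)
    (hrow0 : ∀ j, A ⟨0, hd⟩ j = a j)
    (horth : ∀ i : Fin d, i ≠ ⟨0, hd⟩ → ∑ j, a j * A i j = 0)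
    (hdet : A.det = ∑ j, a j ^ 2) :
    ∀ x : Fin d → ℤ, (∑ j, a j * x j = 0) →
      ∃ c : Fin d → ℤ, c ⟨0, hd⟩ = 0 ∧ ∀ j, x j = ∑ i, c i * A i j := by
  intro x hx
  obtain ⟨u, hu⟩ : ∃ u, a ⬝ᵥ u = 1 := by
    obtain ⟨u, hu⟩ := Finset.univ.gcd_eq_sum_mul a
    exact ⟨u, hu.symm.trans hgcd⟩
  have hnorm : a ⬝ᵥ a ≠ 0 := by
    rw [Ne, dotProduct_self_eq_zero]
    rintro rfl
    exact one_ne_zero (hgcd.symm.trans (Finset.gcd_eq_zero_iff.mpr fun _ _ => rfl))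
  have hdetA : A.det = a ⬝ᵥ a := by simp only [hdet, dotProduct, sq]
  have hunit : IsUnit (A.updateRow ⟨0, hd⟩ u) := by
    have h := dotProduct_mul_det_eq_mul_det_updateRow (funext hrow0) horth u
    rw [hu, one_mul, hdetA] at h
    rw [isUnit_iff_isUnit_det, mul_eq_left₀ hnorm |>.mp h.symm]
    exact isUnit_one
  obtain ⟨c, hc0, hcx⟩ := exists_vecMul_eq_of_dotProduct_eq_zero horth hu hunit hx
  exact ⟨c, hc0, fun j => (congrFun hcx j).symm⟩
end
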